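/- Let 0 < α < 1/2 and define f(s) = ln(α e^{s(1−α)} + (1−α) e^{−sα}). Then, besides the trivial solutions (σ, 0) with arbitrary σ > 0, the system of equations f(s) = σ²s²/2 and f′(s) = σ²s has exactly one solution (σ*, s*) with σ* > 0 and s* ≠ 0, this solution has s* > 0, and the sub-Gaussian norm of a Bernoulli(α) random variable equals σ*. -/

import Mathlib

/-!
With `p(s) = α eˢ / (α eˢ + 1 - α)`, the mean of the exponentially tilted Bernoulli law, one has
`f(s) = log (α eˢ + 1 - α) - α s`, `f' = p - α`, `p' = p (1 - p)`, and `p = 1/2` exactly at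
`T = log ((1 - α) / α) > 0`.

Eliminating `σ²` from the system leaves `ψ(s) = s f'(s) - 2 f(s) = 0`. Since
`ψ'' = s p (1 - p) (1 - 2p)` and `ψ(0) = ψ'(0) = 0`, `ψ` is increasing on `(-∞, T]` and strictly
concave on `[T, ∞)`; as `ψ(2T) = 0`, the only nonzero root is `s* = 2T`, and then
`σ*² = 2 f(2T) / (2T)² = (1 - 2α) / (2T)`.

Because `(f(s) / s²)' = ψ(s) / s³`, the same signs show that `f(s) / s²` is maximal at `2T` among
`s > 0`. Negative `s` reduce to positive ones by the skewness bound `f(-t) ≤ f(t)`, i.e.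
`(1 - α) sinh (α t) ≤ α sinh ((1 - α) t)`. So `f(s) ≤ σ*² s² / 2` for all `s`, with equality at
`2T`, which pins the sub-Gaussian norm to `σ*`.
-/

open MeasureTheory Real

/-- The Bernoulli(α) measure on `ℝ`: mass `α` at `1` and mass `1 - α` at `0`. -/
noncomputable def bernoulliMeasure (α : ℝ) : Measure ℝ :=
  (ENNReal.ofReal α) • Measure.dirac 1 + (ENNReal.ofReal (1 - α)) • Measure.dirac 0

/-- The sub-Gaussian norm of `X` under `P`: the infimum of all `σ > 0` such that
`E_P[exp (s (X - E_P X))] ≤ exp (σ² s² / 2)` for all real `s`. -/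
noncomputable def subGaussianNorm {Ω : Type*} [MeasurableSpace Ω] (P : Measure Ω)
    (X : Ω → ℝ) : ℝ :=
  sInf {σ : ℝ | 0 < σ ∧ ∀ s : ℝ,
    ∫ ω, Real.exp (s * (X ω - ∫ ω', X ω' ∂P)) ∂P ≤ Real.exp (σ ^ 2 * s ^ 2 / 2)}

/-- The centered cumulant generating function of a Bernoulli(α) random variable:
`f(s) = ln (α e^{s(1-α)} + (1-α) e^{-sα})`. -/
noncomputable def bernoulliCGF (α : ℝ) (s : ℝ) : ℝ :=
  Real.log (α * Real.exp (s * (1 - α)) + (1 - α) * Real.exp (-s * α))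

open Set

section MonotoneOfHasDerivAt

variable {f f' : ℝ → ℝ} {D : Set ℝ}

lemma strictMonoOn_of_hasDerivAt_pos (hD : Convex ℝ D) (hf : ∀ x ∈ D, HasDerivAt f (f' x) x)
    (hf' : ∀ x ∈ interior D, 0 < f' x) : StrictMonoOn f D :=
  strictMonoOn_of_hasDerivWithinAt_pos hD (fun x hx ↦ (hf x hx).continuousAt.continuousWithinAt)
    (fun x hx ↦ (hf x (interior_subset hx)).hasDerivWithinAt) hf'

lemma strictAntiOn_of_hasDerivAt_neg (hD : Convex ℝ D) (hf : ∀ x ∈ D, HasDerivAt f (f' x) x)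
    (hf' : ∀ x ∈ interior D, f' x < 0) : StrictAntiOn f D :=
  strictAntiOn_of_hasDerivWithinAt_neg hD (fun x hx ↦ (hf x hx).continuousAt.continuousWithinAt)
    (fun x hx ↦ (hf x (interior_subset hx)).hasDerivWithinAt) hf'

lemma monotoneOn_of_hasDerivAt_nonneg (hD : Convex ℝ D) (hf : ∀ x ∈ D, HasDerivAt f (f' x) x)
    (hf' : ∀ x ∈ interior D, 0 ≤ f' x) : MonotoneOn f D :=
  monotoneOn_of_hasDerivWithinAt_nonneg hD (fun x hx ↦ (hf x hx).continuousAt.continuousWithinAt)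
    (fun x hx ↦ (hf x (interior_subset hx)).hasDerivWithinAt) hf'

lemma antitoneOn_of_hasDerivAt_nonpos (hD : Convex ℝ D) (hf : ∀ x ∈ D, HasDerivAt f (f' x) x)
    (hf' : ∀ x ∈ interior D, f' x ≤ 0) : AntitoneOn f D :=
  antitoneOn_of_hasDerivWithinAt_nonpos hD (fun x hx ↦ (hf x hx).continuousAt.continuousWithinAt)
    (fun x hx ↦ (hf x (interior_subset hx)).hasDerivWithinAt) hf'

end MonotoneOfHasDerivAt

lemma HasDerivAt.div_sq {f : ℝ → ℝ} {f' x : ℝ} (hf : HasDerivAt f f' x) (hx : x ≠ 0) :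
    HasDerivAt (fun y ↦ f y / y ^ 2) ((x * f' - 2 * f x) / x ^ 3) x := by
  refine (hf.div (hasDerivAt_pow 2 x) (pow_ne_zero 2 hx)).congr_deriv ?_
  field_simp
  ring

noncomputable def bernoulliTilt (α s : ℝ) : ℝ := α * exp s / (α * exp s + (1 - α))

noncomputable def bernoulliFairTilt (α : ℝ) : ℝ := log ((1 - α) / α)

noncomputable def bernoulliVarianceProxy (α : ℝ) : ℝ := (1 - 2 * α) / (2 * bernoulliFairTilt α)

noncomputable def bernoulliDefect (α s : ℝ) : ℝ :=
  s * (bernoulliTilt α s - α) - 2 * bernoulliCGF α s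

section Bernoulli

variable {α s : ℝ}

lemma bernoulliTilt_denom_pos (h0 : 0 < α) (h1 : α < 1) (s : ℝ) : 0 < α * exp s + (1 - α) := by
  have := mul_pos h0 (exp_pos s)
  linarith

lemma bernoulliCGF_eq (h0 : 0 < α) (h1 : α < 1) (s : ℝ) :
    bernoulliCGF α s = log (α * exp s + (1 - α)) - α * s := by
  have h : α * exp (s * (1 - α)) + (1 - α) * exp (-s * α) =
      exp (-(α * s)) * (α * exp s + (1 - α)) := by
    rw [show s * (1 - α) = s + -(α * s) by ring, show -s * α = -(α * s) by ring, exp_add]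
    ring
  rw [bernoulliCGF, h, log_mul (exp_ne_zero _) (bernoulliTilt_denom_pos h0 h1 s).ne', log_exp]
  ring

lemma hasDerivAt_bernoulliCGF (h0 : 0 < α) (h1 : α < 1) (s : ℝ) :
    HasDerivAt (bernoulliCGF α) (bernoulliTilt α s - α) s := by
  rw [funext (bernoulliCGF_eq h0 h1)]
  refine ((((hasDerivAt_exp s).const_mul α).add_const (1 - α)).log
    (bernoulliTilt_denom_pos h0 h1 s).ne' |>.sub ((hasDerivAt_id s).const_mul α)).congr_deriv ?_
  simp [bernoulliTilt]

lemma hasDerivAt_bernoulliTilt (h0 : 0 < α) (h1 : α < 1) (s : ℝ) :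
    HasDerivAt (bernoulliTilt α) (bernoulliTilt α s * (1 - bernoulliTilt α s)) s := by
  have hD := (bernoulliTilt_denom_pos h0 h1 s).ne'
  refine (((hasDerivAt_exp s).const_mul α).div
    (((hasDerivAt_exp s).const_mul α).add_const (1 - α)) hD).congr_deriv ?_
  simp only [bernoulliTilt]
  field_simp

lemma bernoulliTilt_pos (h0 : 0 < α) (h1 : α < 1) (s : ℝ) : 0 < bernoulliTilt α s :=
  div_pos (mul_pos h0 (exp_pos s)) (bernoulliTilt_denom_pos h0 h1 s)

lemma bernoulliTilt_lt_one (h0 : 0 < α) (h1 : α < 1) (s : ℝ) : bernoulliTilt α s < 1 := by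
  rw [bernoulliTilt, div_lt_one (bernoulliTilt_denom_pos h0 h1 s)]
  linarith

lemma bernoulliTilt_lt_half_iff (h0 : 0 < α) (h1 : α < 1) :
    bernoulliTilt α s < 1 / 2 ↔ s < bernoulliFairTilt α := by
  rw [bernoulliTilt, div_lt_iff₀ (bernoulliTilt_denom_pos h0 h1 s), bernoulliFairTilt,
    lt_log_iff_exp_lt (div_pos (by linarith) h0), lt_div_iff₀ h0]
  constructor <;> intro h <;> linarith

lemma half_lt_bernoulliTilt_iff (h0 : 0 < α) (h1 : α < 1) :
    1 / 2 < bernoulliTilt α s ↔ bernoulliFairTilt α < s := by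
  rw [bernoulliTilt, lt_div_iff₀ (bernoulliTilt_denom_pos h0 h1 s), bernoulliFairTilt,
    log_lt_iff_lt_exp (div_pos (by linarith) h0), div_lt_iff₀ h0]
  constructor <;> intro h <;> linarith

@[simp] lemma bernoulliTilt_zero : bernoulliTilt α 0 = α := by simp [bernoulliTilt]

@[simp] lemma bernoulliCGF_zero : bernoulliCGF α 0 = 0 := by simp [bernoulliCGF]

lemma bernoulliFairTilt_pos (h0 : 0 < α) (h : α < 1 / 2) : 0 < bernoulliFairTilt α :=
  log_pos (by rw [lt_div_iff₀ h0]; linarith)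

lemma exp_two_mul_bernoulliFairTilt (h0 : 0 < α) (h1 : α < 1) :
    exp (2 * bernoulliFairTilt α) = ((1 - α) / α) ^ 2 := by
  rw [two_mul, exp_add, bernoulliFairTilt, exp_log (div_pos (by linarith) h0), sq]

lemma bernoulliTilt_two_mul_fairTilt (h0 : 0 < α) (h1 : α < 1) :
    bernoulliTilt α (2 * bernoulliFairTilt α) = 1 - α := by
  have : 0 < 1 - α := by linarith
  rw [bernoulliTilt, exp_two_mul_bernoulliFairTilt h0 h1]
  field_simp
  ring

lemma bernoulliCGF_two_mul_fairTilt (h0 : 0 < α) (h1 : α < 1) :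
    bernoulliCGF α (2 * bernoulliFairTilt α) = bernoulliFairTilt α * (1 - 2 * α) := by
  have hD : α * exp (2 * bernoulliFairTilt α) + (1 - α) = (1 - α) / α := by
    rw [exp_two_mul_bernoulliFairTilt h0 h1]
    field_simp
    ring
  rw [bernoulliCGF_eq h0 h1, hD, ← bernoulliFairTilt]
  ring

lemma bernoulliCGF_two_mul_fairTilt_eq_varianceProxy (h0 : 0 < α) (h : α < 1 / 2) :
    bernoulliCGF α (2 * bernoulliFairTilt α) =
      bernoulliVarianceProxy α * (2 * bernoulliFairTilt α) ^ 2 / 2 := by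
  have := (bernoulliFairTilt_pos h0 h).ne'
  rw [bernoulliCGF_two_mul_fairTilt h0 (by linarith), bernoulliVarianceProxy]
  field_simp

lemma deriv_bernoulliCGF_two_mul_fairTilt (h0 : 0 < α) (h : α < 1 / 2) :
    deriv (bernoulliCGF α) (2 * bernoulliFairTilt α) =
      bernoulliVarianceProxy α * (2 * bernoulliFairTilt α) := by
  have := (bernoulliFairTilt_pos h0 h).ne'
  rw [(hasDerivAt_bernoulliCGF h0 (by linarith) _).deriv,
    bernoulliTilt_two_mul_fairTilt h0 (by linarith), bernoulliVarianceProxy]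
  field_simp
  ring

lemma bernoulliVarianceProxy_pos (h0 : 0 < α) (h : α < 1 / 2) : 0 < bernoulliVarianceProxy α :=
  div_pos (by linarith) (by linarith [bernoulliFairTilt_pos h0 h])


lemma bernoulliTilt_mul_one_sub_pos (h0 : 0 < α) (h1 : α < 1) (s : ℝ) :
    0 < bernoulliTilt α s * (1 - bernoulliTilt α s) :=
  mul_pos (bernoulliTilt_pos h0 h1 s) (by linarith [bernoulliTilt_lt_one h0 h1 s])

lemma hasDerivAt_bernoulliDefect (h0 : 0 < α) (h1 : α < 1) (s : ℝ) :
    HasDerivAt (bernoulliDefect α)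
      (s * (bernoulliTilt α s * (1 - bernoulliTilt α s)) - (bernoulliTilt α s - α)) s := by
  refine (((hasDerivAt_id s).mul ((hasDerivAt_bernoulliTilt h0 h1 s).sub_const α)).sub
    ((hasDerivAt_bernoulliCGF h0 h1 s).const_mul 2)).congr_deriv ?_
  simp only [id_eq]
  ring

lemma differentiable_bernoulliDefect (h0 : 0 < α) (h1 : α < 1) :
    Differentiable ℝ (bernoulliDefect α) :=
  fun s ↦ (hasDerivAt_bernoulliDefect h0 h1 s).differentiableAt

lemma deriv_bernoulliDefect (h0 : 0 < α) (h1 : α < 1) :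
    deriv (bernoulliDefect α) =
      fun s ↦ s * (bernoulliTilt α s * (1 - bernoulliTilt α s)) - (bernoulliTilt α s - α) :=
  funext fun s ↦ (hasDerivAt_bernoulliDefect h0 h1 s).deriv

lemma hasDerivAt_deriv_bernoulliDefect (h0 : 0 < α) (h1 : α < 1) (s : ℝ) :
    HasDerivAt (deriv (bernoulliDefect α))
      (s * (bernoulliTilt α s * (1 - bernoulliTilt α s)) * (1 - 2 * bernoulliTilt α s)) s := by
  have hp := hasDerivAt_bernoulliTilt h0 h1 s
  rw [deriv_bernoulliDefect h0 h1]
  refine (((hasDerivAt_id s).mul (hp.mul ((hasDerivAt_const s 1).sub hp))).sub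
    (hp.sub_const α)).congr_deriv ?_
  simp only [id_eq, Pi.mul_apply, Pi.sub_apply]
  ring

lemma deriv_bernoulliDefect_pos (h0 : 0 < α) (h : α < 1 / 2) (hs : s ≠ 0)
    (hsT : s ≤ bernoulliFairTilt α) : 0 < deriv (bernoulliDefect α) s := by
  have h1 : α < 1 := by linarith
  have hT := bernoulliFairTilt_pos h0 h
  have hψ'0 : deriv (bernoulliDefect α) 0 = 0 := by simp [deriv_bernoulliDefect h0 h1]
  have hψ'' := hasDerivAt_deriv_bernoulliDefect h0 h1
  have hpp := bernoulliTilt_mul_one_sub_pos h0 h1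
  rcases hs.lt_or_gt with hs | hs
  · have hanti : StrictAntiOn (deriv (bernoulliDefect α)) (Iic 0) :=
      strictAntiOn_of_hasDerivAt_neg (convex_Iic 0) (fun x _ ↦ hψ'' x) fun x hx ↦ by
        rw [interior_Iic] at hx
        have := (bernoulliTilt_lt_half_iff h0 h1).2 (hx.trans hT)
        exact mul_neg_of_neg_of_pos (mul_neg_of_neg_of_pos hx (hpp x)) (by linarith)
    simpa [hψ'0] using hanti hs.le (mem_Iic.2 le_rfl) hs
  · have hmono : StrictMonoOn (deriv (bernoulliDefect α)) (Icc 0 (bernoulliFairTilt α)) :=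
      strictMonoOn_of_hasDerivAt_pos (convex_Icc _ _) (fun x _ ↦ hψ'' x) fun x hx ↦ by
        rw [interior_Icc] at hx
        have := (bernoulliTilt_lt_half_iff h0 h1).2 hx.2
        exact mul_pos (mul_pos hx.1 (hpp x)) (by linarith)
    simpa [hψ'0] using hmono (left_mem_Icc.2 hT.le) ⟨hs.le, hsT⟩ hs

lemma bernoulliDefect_neg_of_neg (h0 : 0 < α) (h : α < 1 / 2) (hs : s < 0) :
    bernoulliDefect α s < 0 := by
  have hmono : StrictMonoOn (bernoulliDefect α) (Iic 0) :=
    strictMonoOn_of_hasDerivAt_pos (convex_Iic 0)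
      (fun x _ ↦ (differentiable_bernoulliDefect h0 (by linarith) x).hasDerivAt) fun x hx ↦ by
        rw [interior_Iic] at hx
        exact deriv_bernoulliDefect_pos h0 h hx.ne (hx.le.trans (bernoulliFairTilt_pos h0 h).le)
  simpa [bernoulliDefect] using hmono hs.le (mem_Iic.2 le_rfl) hs

lemma bernoulliDefect_pos_of_le_fairTilt (h0 : 0 < α) (h : α < 1 / 2) (hs : 0 < s)
    (hsT : s ≤ bernoulliFairTilt α) : 0 < bernoulliDefect α s := by
  have hmono : StrictMonoOn (bernoulliDefect α) (Icc 0 (bernoulliFairTilt α)) :=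
    strictMonoOn_of_hasDerivAt_pos (convex_Icc _ _)
      (fun x _ ↦ (differentiable_bernoulliDefect h0 (by linarith) x).hasDerivAt) fun x hx ↦ by
        rw [interior_Icc] at hx
        exact deriv_bernoulliDefect_pos h0 h hx.1.ne' hx.2.le
  simpa [bernoulliDefect] using
    hmono (left_mem_Icc.2 (bernoulliFairTilt_pos h0 h).le) ⟨hs.le, hsT⟩ hs

lemma strictConcaveOn_bernoulliDefect (h0 : 0 < α) (h : α < 1 / 2) :
    StrictConcaveOn ℝ (Ici (bernoulliFairTilt α)) (bernoulliDefect α) := by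
  have h1 : α < 1 := by linarith
  have hanti : StrictAntiOn (deriv (bernoulliDefect α)) (Ici (bernoulliFairTilt α)) :=
    strictAntiOn_of_hasDerivAt_neg (convex_Ici _)
      (fun x _ ↦ hasDerivAt_deriv_bernoulliDefect h0 h1 x) fun x hx ↦ by
        rw [interior_Ici] at hx
        have := (half_lt_bernoulliTilt_iff h0 h1).2 hx
        have hx0 : 0 < x := (bernoulliFairTilt_pos h0 h).trans hx
        exact mul_neg_of_pos_of_neg (mul_pos hx0 (bernoulliTilt_mul_one_sub_pos h0 h1 x))
          (by linarith)
  exact StrictAntiOn.strictConcaveOn_of_deriv (convex_Ici _)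
    (differentiable_bernoulliDefect h0 h1).continuous.continuousOn (hanti.mono interior_subset)

lemma bernoulliDefect_two_mul_fairTilt (h0 : 0 < α) (h1 : α < 1) :
    bernoulliDefect α (2 * bernoulliFairTilt α) = 0 := by
  rw [bernoulliDefect, bernoulliTilt_two_mul_fairTilt h0 h1, bernoulliCGF_two_mul_fairTilt h0 h1]
  ring

lemma bernoulliDefect_pos (h0 : 0 < α) (h : α < 1 / 2) (hs : 0 < s)
    (hsT : s < 2 * bernoulliFairTilt α) : 0 < bernoulliDefect α s := by
  have hT := bernoulliFairTilt_pos h0 h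
  rcases le_or_gt s (bernoulliFairTilt α) with hle | hlt
  · exact bernoulliDefect_pos_of_le_fairTilt h0 h hs hle
  · have := (strictConcaveOn_bernoulliDefect h0 h).lt_on_openSegment
      (x := bernoulliFairTilt α) (y := 2 * bernoulliFairTilt α) (mem_Ici.2 le_rfl)
      (mem_Ici.2 (by linarith)) (by linarith)
      (by rw [openSegment_eq_Ioo (by linarith)]; exact ⟨hlt, hsT⟩)
    rwa [bernoulliDefect_two_mul_fairTilt h0 (by linarith),
      min_eq_right (bernoulliDefect_pos_of_le_fairTilt h0 h hT le_rfl).le] at this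

lemma bernoulliDefect_neg_of_two_mul_fairTilt_lt (h0 : 0 < α) (h : α < 1 / 2)
    (hs : 2 * bernoulliFairTilt α < s) : bernoulliDefect α s < 0 := by
  have hT := bernoulliFairTilt_pos h0 h
  have h2T := bernoulliDefect_two_mul_fairTilt h0 (by linarith : α < 1)
  have := (strictConcaveOn_bernoulliDefect h0 h).concaveOn.lt_right_of_left_lt
    (mem_Ici.2 le_rfl) (mem_Ici.2 (by linarith : bernoulliFairTilt α ≤ s))
    (by rw [openSegment_eq_Ioo (by linarith)]; constructor <;> linarith)
    (h2T ▸ bernoulliDefect_pos_of_le_fairTilt h0 h hT le_rfl)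
  rwa [h2T] at this

lemma eq_two_mul_fairTilt_of_bernoulliDefect_eq_zero (h0 : 0 < α) (h : α < 1 / 2) (hs : s ≠ 0)
    (hψ : bernoulliDefect α s = 0) : s = 2 * bernoulliFairTilt α := by
  rcases hs.lt_or_gt with hneg | hpos
  · exact absurd hψ (bernoulliDefect_neg_of_neg h0 h hneg).ne
  rcases lt_trichotomy s (2 * bernoulliFairTilt α) with hlt | heq | hgt
  · exact absurd hψ (bernoulliDefect_pos h0 h hpos hlt).ne'
  · exact heq
  · exact absurd hψ (bernoulliDefect_neg_of_two_mul_fairTilt_lt h0 h hgt).ne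

lemma bernoulliCGF_le_of_pos (h0 : 0 < α) (h : α < 1 / 2) (hs : 0 < s) :
    bernoulliCGF α s ≤ bernoulliVarianceProxy α * s ^ 2 / 2 := by
  have h1 : α < 1 := by linarith
  have hT := bernoulliFairTilt_pos h0 h
  set R : ℝ → ℝ := fun x ↦ bernoulliCGF α x / x ^ 2
  have hR : ∀ x, 0 < x → HasDerivAt R (bernoulliDefect α x / x ^ 3) x := fun x hx ↦
    (hasDerivAt_bernoulliCGF h0 h1 x).div_sq hx.ne'
  have hmono : MonotoneOn R (Ioc 0 (2 * bernoulliFairTilt α)) :=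
    monotoneOn_of_hasDerivAt_nonneg (convex_Ioc _ _) (fun x hx ↦ hR x hx.1) fun x hx ↦ by
      rw [interior_Ioc] at hx
      exact (div_pos (bernoulliDefect_pos h0 h hx.1 hx.2) (pow_pos hx.1 3)).le
  have hanti : AntitoneOn R (Ici (2 * bernoulliFairTilt α)) :=
    antitoneOn_of_hasDerivAt_nonpos (convex_Ici _)
      (fun x hx ↦ hR x (by linarith [mem_Ici.1 hx])) fun x hx ↦ by
        rw [interior_Ici] at hx
        exact (div_neg_of_neg_of_pos (bernoulliDefect_neg_of_two_mul_fairTilt_lt h0 h hx)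
          (pow_pos (by linarith [mem_Ioi.1 hx]) 3)).le
  have hRs : R s ≤ R (2 * bernoulliFairTilt α) := by
    rcases le_total s (2 * bernoulliFairTilt α) with hle | hge
    · exact hmono ⟨hs, hle⟩ ⟨by linarith, le_rfl⟩ hle
    · exact hanti (mem_Ici.2 le_rfl) hge hge
  have hR2T : R (2 * bernoulliFairTilt α) = bernoulliVarianceProxy α / 2 := by
    simp only [R]
    rw [bernoulliCGF_two_mul_fairTilt_eq_varianceProxy h0 h]
    field_simp
  rw [hR2T, div_le_iff₀ (pow_pos hs 2)] at hRs
  linarith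

lemma bernoulliCGF_neg_le (h0 : 0 < α) (h : α ≤ 1 / 2) {t : ℝ} (ht : 0 ≤ t) :
    bernoulliCGF α (-t) ≤ bernoulliCGF α t := by
  set g : ℝ → ℝ := fun x ↦ α * sinh ((1 - α) * x) - (1 - α) * sinh (α * x)
  have hg : ∀ x, HasDerivAt g
      (α * (cosh ((1 - α) * x) * (1 - α)) - (1 - α) * (cosh (α * x) * α)) x := fun x ↦
    (((hasDerivAt_sinh _).comp x ((hasDerivAt_id x).const_mul (1 - α))).const_mul α).sub
      (((hasDerivAt_sinh _).comp x ((hasDerivAt_id x).const_mul α)).const_mul (1 - α))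
      |>.congr_deriv (by simp)
  have hmono : MonotoneOn g (Ici 0) :=
    monotoneOn_of_hasDerivAt_nonneg (convex_Ici 0) (fun x _ ↦ hg x) fun x hx ↦ by
      rw [interior_Ici] at hx
      have : cosh (α * x) ≤ cosh ((1 - α) * x) := by
        rw [cosh_le_cosh, abs_of_pos (mul_pos h0 hx), abs_of_pos (mul_pos (by linarith) hx)]
        nlinarith [mem_Ioi.1 hx]
      nlinarith [mul_nonneg (mul_pos h0 (by linarith : (0 : ℝ) < 1 - α)).le (sub_nonneg.2 this)]
  have key : 0 ≤ g t := by simpa [g] using hmono (mem_Ici.2 le_rfl) (mem_Ici.2 ht) ht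
  simp only [g, sinh_eq] at key
  have h1 : 0 < 1 - α := by linarith
  apply log_le_log (by positivity)
  rw [neg_neg, neg_mul, neg_mul, mul_comm t, mul_comm t]
  linarith

lemma bernoulliCGF_le (h0 : 0 < α) (h : α < 1 / 2) (s : ℝ) :
    bernoulliCGF α s ≤ bernoulliVarianceProxy α * s ^ 2 / 2 := by
  rcases lt_trichotomy s 0 with hs | rfl | hs
  · calc bernoulliCGF α s = bernoulliCGF α (-(-s)) := by rw [neg_neg]
      _ ≤ bernoulliCGF α (-s) := bernoulliCGF_neg_le h0 h.le (by linarith)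
      _ ≤ bernoulliVarianceProxy α * (-s) ^ 2 / 2 := bernoulliCGF_le_of_pos h0 h (by linarith)
      _ = bernoulliVarianceProxy α * s ^ 2 / 2 := by ring
  · simp
  · exact bernoulliCGF_le_of_pos h0 h hs

end Bernoulli

lemma integral_bernoulliMeasure {α : ℝ} (h0 : 0 ≤ α) (h1 : α ≤ 1) (f : ℝ → ℝ) :
    ∫ x, f x ∂bernoulliMeasure α = α * f 1 + (1 - α) * f 0 := by
  rw [bernoulliMeasure, integral_add_measure ((integrable_dirac (by simp)).smul_measure (by simp))
      ((integrable_dirac (by simp)).smul_measure (by simp)),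
    integral_smul_measure, integral_smul_measure, integral_dirac, integral_dirac,
    ENNReal.toReal_ofReal h0, ENNReal.toReal_ofReal (by linarith), smul_eq_mul, smul_eq_mul]

lemma integral_exp_mul_sub_mean_bernoulliMeasure {α : ℝ} (h0 : 0 < α) (h1 : α < 1) (s : ℝ) :
    ∫ x, exp (s * (id x - ∫ y, id y ∂bernoulliMeasure α)) ∂bernoulliMeasure α =
      exp (bernoulliCGF α s) := by
  have hmean : ∫ y, id y ∂bernoulliMeasure α = α := by
    simp [integral_bernoulliMeasure h0.le h1.le]
  have hpos : 0 < α * exp (s * (1 - α)) + (1 - α) * exp (-s * α) := by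
    have : 0 < 1 - α := by linarith
    positivity
  rw [hmean, integral_bernoulliMeasure h0.le h1.le, bernoulliCGF, exp_log hpos]
  simp only [id_eq, zero_sub, mul_neg, neg_mul]

lemma subGaussianNorm_eq_sqrt {Ω : Type*} [MeasurableSpace Ω] {P : Measure Ω} {X : Ω → ℝ}
    {F : ℝ → ℝ} {b s₀ : ℝ}
    (hF : ∀ s, ∫ ω, exp (s * (X ω - ∫ ω', X ω' ∂P)) ∂P = exp (F s)) (hb : 0 < b)
    (hs₀ : s₀ ≠ 0) (hle : ∀ s, F s ≤ b * s ^ 2 / 2) (heq : F s₀ = b * s₀ ^ 2 / 2) :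
    subGaussianNorm P X = √b := by
  simp only [subGaussianNorm, hF, exp_le_exp]
  refine le_antisymm (csInf_le ⟨0, fun σ hσ ↦ hσ.1.le⟩ ⟨sqrt_pos.2 hb, fun s ↦ ?_⟩)
    (le_csInf ⟨√b, sqrt_pos.2 hb, fun s ↦ ?_⟩ fun σ ⟨hσ, hσF⟩ ↦ ?_)
  · rw [sq_sqrt hb.le]; exact hle s
  · rw [sq_sqrt hb.le]; exact hle s
  · have := heq ▸ hσF s₀
    rw [sqrt_le_iff]
    exact ⟨hσ.le, by nlinarith [pow_pos (sq_pos_of_ne_zero hs₀) 1]⟩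

/-- For `0 < α < 1/2`, besides the trivial solutions `(σ, 0)`, the system
`f(s) = σ² s² / 2`, `f'(s) = σ² s` has exactly one solution `(σ*, s*)` with `σ* > 0` and
`s* ≠ 0`; moreover `s* > 0` and the sub-Gaussian norm of a Bernoulli(α) random variable
equals `σ*`. -/
theorem bernoulli_norm_characterization (α : ℝ) (hα₀ : 0 < α) (hα : α < 1 / 2) :
    ∃ p : ℝ × ℝ,
      (0 < p.1 ∧ p.2 ≠ 0 ∧ bernoulliCGF α p.2 = p.1 ^ 2 * p.2 ^ 2 / 2 ∧
        deriv (bernoulliCGF α) p.2 = p.1 ^ 2 * p.2) ∧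
      (∀ q : ℝ × ℝ,
        (0 < q.1 ∧ q.2 ≠ 0 ∧ bernoulliCGF α q.2 = q.1 ^ 2 * q.2 ^ 2 / 2 ∧
          deriv (bernoulliCGF α) q.2 = q.1 ^ 2 * q.2) → q = p) ∧
      0 < p.2 ∧ subGaussianNorm (bernoulliMeasure α) id = p.1 := by
  have h1 : α < 1 := by linarith
  have hT := bernoulliFairTilt_pos hα₀ hα
  have hV := bernoulliVarianceProxy_pos hα₀ hα
  have hF := bernoulliCGF_two_mul_fairTilt_eq_varianceProxy hα₀ hα
  refine ⟨(√(bernoulliVarianceProxy α), 2 * bernoulliFairTilt α), ⟨sqrt_pos.2 hV, by positivity,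
    by rwa [sq_sqrt hV.le], by rw [sq_sqrt hV.le]; exact deriv_bernoulliCGF_two_mul_fairTilt hα₀ hα⟩,
    ?_, by positivity,
    subGaussianNorm_eq_sqrt (integral_exp_mul_sub_mean_bernoulliMeasure hα₀ h1) hV
      (by positivity) (bernoulliCGF_le hα₀ hα) hF⟩
  rintro ⟨σ, s⟩ ⟨hσ, hs, hFs, hF's⟩
  have hψ : bernoulliDefect α s = 0 := by
    rw [bernoulliDefect, ← (hasDerivAt_bernoulliCGF hα₀ h1 s).deriv, hF's, hFs]
    ring
  obtain rfl := eq_two_mul_fairTilt_of_bernoulliDefect_eq_zero hα₀ hα hs hψ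
  have hσV : σ ^ 2 = bernoulliVarianceProxy α := by
    have : (0 : ℝ) < (2 * bernoulliFairTilt α) ^ 2 := by positivity
    nlinarith
  rw [← hσV, sqrt_sq hσ.le]
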